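/- If x is an unpredictable sequence for the shift over a finite metric space, then the closure of the forward orbit of x under the shift contains infinitely many distinct points; in particular the orbit of x is infinite. -/
import Mathlib


/-- The metric δ(x,y) = Σ_{k=1}^∞ d(x_k,y_k)/2^k on the space F = ℕ → S of
sequences in S (here the k-th coordinate, k = 0,1,2,..., plays the role of
x_{k+1}, so it carries the weight 1/2^{k+1}). -/
noncomputable def seqDist {S : Type*} [MetricSpace S] (x y : ℕ → S) : ℝ :=
  ∑' k : ℕ, dist (x k) (y k) / 2 ^ (k + 1)

/-- The shift map φ(x)_k = x_{k+1}. -/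
def shift {S : Type*} (x : ℕ → S) : ℕ → S := fun k => x (k + 1)

open Filter in
/-- A sequence x : ℕ → S is unpredictable (Definition 2 of the paper): there are
ε₀ > 0 and sequences ζ_n, η_n of positive integers diverging to ∞ such that
x_{i+ζ_n} = x_i on every bounded interval of integers for n large, while
d(x_{ζ_n+η_n}, x_{η_n}) ≥ ε₀ for every n. -/
def Unpredictable {S : Type*} [MetricSpace S] (x : ℕ → S) : Prop :=
  ∃ (ε₀ : ℝ) (ζ η : ℕ → ℕ), 0 < ε₀ ∧ (∀ n, 0 < ζ n) ∧ (∀ n, 0 < η n) ∧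
    Tendsto ζ atTop atTop ∧ Tendsto η atTop atTop ∧
    (∀ N : ℕ, ∀ᶠ n in atTop, ∀ i ≤ N, x (i + ζ n) = x i) ∧
    (∀ n, ε₀ ≤ dist (x (ζ n + η n)) (x (η n)))

lemma shift_iterate_apply {S : Type*} (x : ℕ → S) (n k : ℕ) :
    shift^[n] x k = x (k + n) := by
  induction n generalizing k with
  | zero => rfl
  | succ n ih =>
    rw [Function.iterate_succ_apply']
    show shift^[n] x (k + 1) = x (k + (n + 1))
    rw [ih]
    congr 1
    omega

open Filter in
/-- The forward orbit of an unpredictable sequence under the shift consists of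
infinitely many distinct points (hence so does its closure). -/
theorem unpredictable_orbit_infinite {S : Type*} [MetricSpace S] [Fintype S]
    (x : ℕ → S) (hx : Unpredictable x) :
    (Set.range fun n : ℕ => shift^[n] x).Infinite := by
  by_contra hfin
  rw [Set.not_infinite] at hfin
  have hninj : ¬ Function.Injective (fun n : ℕ => shift^[n] x) :=
    fun hinj => (Set.infinite_range_of_injective hinj) hfin
  obtain ⟨a, b, hab, hne⟩ := Function.not_injective_iff.mp hninj
  -- wlog m < m'
  obtain ⟨m, m', hmm, heq⟩ : ∃ m m', m < m' ∧ shift^[m] x = shift^[m'] x := by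
    rcases lt_or_gt_of_ne hne with h | h
    · exact ⟨a, b, h, hab⟩
    · exact ⟨b, a, h, hab.symm⟩
  set p := m' - m with hp
  have hppos : 0 < p := by omega
  -- eventual periodicity with period p
  have hper : ∀ k, m ≤ k → x (k + p) = x k := by
    intro k hk
    have h := congrFun heq (k - m)
    rw [shift_iterate_apply, shift_iterate_apply] at h
    have h1 : k - m + m = k := by omega
    have h2 : k - m + m' = k + p := by omega
    rw [h1, h2] at h
    exact h.symm
  have hper2 : ∀ t k, m ≤ k → x (k + p * t) = x k := by
    intro t
    induction t with
    | zero => intro k hk; simp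
    | succ t ih =>
      intro k hk
      have h1 : k + p * (t + 1) = (k + p * t) + p := by ring
      rw [h1, hper _ (by omega), ih k hk]
  have hcongr : ∀ a b, m ≤ a → a ≤ b → a % p = b % p → x b = x a := by
    intro a b ha hab hmod
    have hd : p ∣ b - a := (Nat.modEq_iff_dvd' hab).mp hmod
    obtain ⟨t, ht⟩ := hd
    have : b = a + p * t := by omega
    rw [this]
    exact hper2 t a ha
  obtain ⟨ε₀, ζ, η, hε, hζpos, hηpos, hζt, hηt, hN, hd⟩ := hx
  obtain ⟨n, hn1, hn2⟩ := ((hN (m + p)).and (hηt.eventually (eventually_ge_atTop m))).exists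
  set r := m + (η n - m) % p with hr
  have hrle : r ≤ η n := by
    have := Nat.mod_le (η n - m) p
    omega
  have hrmod : r % p = η n % p := by
    have h1 : m + (η n - m) % p ≡ m + (η n - m) [MOD p] :=
      Nat.ModEq.add_left m (Nat.mod_modEq (η n - m) p)
    have h2 : m + (η n - m) = η n := by omega
    rw [h2] at h1
    exact h1
  have e1 : x (η n) = x r := hcongr r (η n) (by omega) hrle hrmod
  have e2 : x (r + ζ n) = x r := by
    apply hn1
    have := Nat.mod_lt (η n - m) hppos
    omega
  have e3 : x (η n + ζ n) = x (r + ζ n) :=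
    hcongr (r + ζ n) (η n + ζ n) (by omega) (by omega) (Nat.ModEq.add_right (ζ n) hrmod)
  have key : x (ζ n + η n) = x (η n) := by
    rw [Nat.add_comm (ζ n) (η n), e3, e2, e1]
  have := hd n
  rw [key, dist_self] at this
  linarith
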